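/- arXiv:2101.09623 — 4 statements merged into one kernel-verified Lean document; each statement's English description precedes it below -/
import Mathlib

section
/- Let Ω = [x_L, x_R] and suppose u_N, f_N, c_L, c_R : Ω → ℝ are continuously differentiable, with c_L(x_R) = c_R(x_L) = 0 and c_L(x_L) = c_R(x_R) = 1. If ∂_t u_N(x) = -f_N'(x) - c_L'(x)·(F_L - f_N(x_L)) - c_R'(x)·(F_R - f_N(x_R)) for all x ∈ Ω (where F_L, F_R are real constants), then d/dt ∫_Ω u_N dx = -(F_R - F_L). -/
open MeasureTheory intervalIntegral

/-!
The right-hand side of the scheme is minus the derivative of the corrected flux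
`f_C = f_N + c_L (F_L - f_N(x_L)) + c_R (F_R - f_N(x_R))`, and the boundary normalization of
the correction functions makes `f_C(x_L) = F_L` and `f_C(x_R) = F_R`. The fundamental theorem
of calculus then gives `∫ ∂_t u_N = -(f_C(x_R) - f_C(x_L)) = -(F_R - F_L)`.
-/

section CorrectedFlux

def correctedFlux (f cL cR : ℝ → ℝ) (xL xR FL FR : ℝ) (x : ℝ) : ℝ :=
  f x + cL x * (FL - f xL) + cR x * (FR - f xR)

variable {f f' cL cL' cR cR' : ℝ → ℝ} {xL xR FL FR : ℝ}

theorem correctedFlux_left (hcL : cL xL = 1) (hcR : cR xL = 0) :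
    correctedFlux f cL cR xL xR FL FR xL = FL := by
  simp only [correctedFlux, hcL, hcR]
  ring

theorem correctedFlux_right (hcL : cL xR = 0) (hcR : cR xR = 1) :
    correctedFlux f cL cR xL xR FL FR xR = FR := by
  simp only [correctedFlux, hcL, hcR]
  ring

theorem hasDerivAt_correctedFlux {x : ℝ} (hf : HasDerivAt f (f' x) x)
    (hcL : HasDerivAt cL (cL' x) x) (hcR : HasDerivAt cR (cR' x) x) :
    HasDerivAt (correctedFlux f cL cR xL xR FL FR)
      (f' x + cL' x * (FL - f xL) + cR' x * (FR - f xR)) x :=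
  (hf.add (hcL.mul_const _)).add (hcR.mul_const _)

theorem integral_deriv_correctedFlux
    (hf : ∀ x ∈ Set.uIcc xL xR, HasDerivAt f (f' x) x) (hf' : IntervalIntegrable f' volume xL xR)
    (hcL : ∀ x ∈ Set.uIcc xL xR, HasDerivAt cL (cL' x) x)
    (hcL' : IntervalIntegrable cL' volume xL xR)
    (hcR : ∀ x ∈ Set.uIcc xL xR, HasDerivAt cR (cR' x) x)
    (hcR' : IntervalIntegrable cR' volume xL xR) :
    ∫ x in xL..xR, (f' x + cL' x * (FL - f xL) + cR' x * (FR - f xR)) =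
      correctedFlux f cL cR xL xR FL FR xR - correctedFlux f cL cR xL xR FL FR xL :=
  integral_eq_sub_of_hasDerivAt
    (fun x hx => hasDerivAt_correctedFlux (hf x hx) (hcL x hx) (hcR x hx))
    ((hf'.add (hcL'.mul_const _)).add (hcR'.mul_const _))

end CorrectedFlux

theorem frRBF_conservation_general
    (xL xR : ℝ)
    (uN uN_t : ℝ → ℝ → ℝ) (fN fN' cL cL' cR cR' : ℝ → ℝ) (FL FR : ℝ) (t₀ : ℝ)
    -- C¹ regularity of fN, cL, cR on Ω = [xL, xR]
    (hfN : ∀ x ∈ Set.uIcc xL xR, HasDerivAt fN (fN' x) x)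
    (hfN' : IntervalIntegrable fN' volume xL xR)
    (hcL : ∀ x ∈ Set.uIcc xL xR, HasDerivAt cL (cL' x) x)
    (hcL' : IntervalIntegrable cL' volume xL xR)
    (hcR : ∀ x ∈ Set.uIcc xL xR, HasDerivAt cR (cR' x) x)
    (hcR' : IntervalIntegrable cR' volume xL xR)
    -- boundary normalization of the correction functions
    (hcLL : cL xL = 1) (hcLR : cL xR = 0) (hcRL : cR xL = 0) (hcRR : cR xR = 1)
    -- the FR-RBF semidiscretization
    (hpde : ∀ x, uN_t t₀ x = -(fN' x) - cL' x * (FL - fN xL) - cR' x * (FR - fN xR))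
    -- differentiation under the integral sign is assumed valid
    (hdiff : HasDerivAt (fun t => ∫ x in xL..xR, uN t x)
      (∫ x in xL..xR, uN_t t₀ x) t₀) :
    HasDerivAt (fun t => ∫ x in xL..xR, uN t x) (-(FR - FL)) t₀ := by
  have hrhs : (fun x => uN_t t₀ x) =
      fun x => -(fN' x + cL' x * (FL - fN xL) + cR' x * (FR - fN xR)) := by
    funext x
    rw [hpde]
    ring
  have hflux := integral_deriv_correctedFlux (FL := FL) (FR := FR) hfN hfN' hcL hcL' hcR hcR'
  rw [correctedFlux_left hcLL hcRL, correctedFlux_right hcLR hcRR] at hflux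
  rwa [hrhs, intervalIntegral.integral_neg, hflux] at hdiff

/-- Conservation of the FR-RBF method: if the semidiscrete time derivative of `uN` is
`-fN' - cL'·(FL - fN xL) - cR'·(FR - fN xR)` and the correction functions satisfy the
boundary normalization, then `d/dt ∫ uN dx = -(FR - FL)`. -/
theorem frRBF_conservation
    (xL xR : ℝ) (hx : xL ≤ xR)
    (uN uN_t : ℝ → ℝ → ℝ) (fN fN' cL cL' cR cR' : ℝ → ℝ) (FL FR : ℝ) (t₀ : ℝ)
    -- C¹ regularity of fN, cL, cR on Ω = [xL, xR]
    (hfN : ∀ x ∈ Set.uIcc xL xR, HasDerivAt fN (fN' x) x)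
    (hfN' : IntervalIntegrable fN' volume xL xR)
    (hcL : ∀ x ∈ Set.uIcc xL xR, HasDerivAt cL (cL' x) x)
    (hcL' : IntervalIntegrable cL' volume xL xR)
    (hcR : ∀ x ∈ Set.uIcc xL xR, HasDerivAt cR (cR' x) x)
    (hcR' : IntervalIntegrable cR' volume xL xR)
    -- boundary normalization of the correction functions
    (hcLL : cL xL = 1) (hcLR : cL xR = 0) (hcRL : cR xL = 0) (hcRR : cR xR = 1)
    -- the FR-RBF semidiscretization
    (hpde : ∀ x, uN_t t₀ x = -(fN' x) - cL' x * (FL - fN xL) - cR' x * (FR - fN xR))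
    -- differentiation under the integral sign is assumed valid
    (hdiff : HasDerivAt (fun t => ∫ x in xL..xR, uN t x)
      (∫ x in xL..xR, uN_t t₀ x) t₀) :
    HasDerivAt (fun t => ∫ x in xL..xR, uN t x) (-(FR - FL)) t₀ :=
  frRBF_conservation_general xL xR uN uN_t fN fN' cL cL' cR cR' FL FR t₀ hfN hfN' hcL hcL' hcR hcR'
    hcLL hcLR hcRL hcRR hpde hdiff
end

section
/- Let a > 0, g : [0,∞) → ℝ, and let u : [0,∞) → V be a time-dependent element of a finite-dimensional subspace V ⊆ C¹([x_L,x_R]). Suppose the correction functions c_L, c_R ∈ C¹([x_L,x_R]) satisfy ∫ v·c_L' dx = -v(x_L) and ∫ v·c_R' dx = v(x_R) for all v ∈ V. If u satisfies ∂_t u = -a·u' - c_L'·(a·g(t) - a·u(x_L,t)) - c_R'·(a·u(x_R,t) - a·u(x_R,t)), then d/dt ‖u(·,t)‖²_{L²} ≤ a·g(t)². -/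
open MeasureTheory intervalIntegral

/-!
Testing the semidiscretization against `u` itself, `∫ u u_x = (u_R² - u_L²)/2` and the
stability condition `∫ u c_L' = -u_L` turn `½ d/dt ‖u‖²` into boundary terms only, and
completing the square gives `d/dt ‖u‖² = a g² - a (g - u_L)² - a u_R² ≤ a g²`.
-/

namespace intervalIntegral

/-- The second alternative is the junk value `0` of the non-integrable `f + c * h` when `h` is
not integrable and `c ≠ 0`. -/
theorem integral_add_const_mul_eq_or_eq_zero {μ : Measure ℝ} {a b c : ℝ} {f h : ℝ → ℝ}
    (hf : IntervalIntegrable f μ a b) :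
    (∫ x in a..b, f x + c * h x ∂μ) = (∫ x in a..b, f x ∂μ) + c * ∫ x in a..b, h x ∂μ ∨
      (∫ x in a..b, f x + c * h x ∂μ) = 0 := by
  by_cases hh : IntervalIntegrable h μ a b
  · left
    rw [integral_add hf (hh.const_mul c), integral_const_mul]
  by_cases hc : c = 0
  · left
    simp [hc]
  right
  refine integral_undef fun hsum => hh ?_
  have hch : IntervalIntegrable (fun x => c * h x) μ a b := by
    simpa using hsum.sub hf
  simpa [hc] using hch.const_mul c⁻¹

theorem integral_self_mul_deriv_eq {a b : ℝ} {f f' : ℝ → ℝ}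
    (hf : ∀ x ∈ Set.uIcc a b, HasDerivAt f (f' x) x)
    (hint : IntervalIntegrable (fun x => f x * f' x) volume a b) :
    ∫ x in a..b, f x * f' x = (f b ^ 2 - f a ^ 2) / 2 := by
  have hsq : ∫ x in a..b, 2 * (f x * f' x) = f b ^ 2 - f a ^ 2 := by
    refine integral_eq_sub_of_hasDerivAt (f := fun x => f x ^ 2)
      (fun x hx => ((hf x hx).fun_pow 2).congr_deriv ?_) (hint.const_mul 2)
    push_cast
    ring
  rw [integral_const_mul] at hsq
  linarith

end intervalIntegral

theorem frRBF_energy_estimate_general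
    (xL xR : ℝ) (a : ℝ) (ha : 0 < a) (g : ℝ → ℝ)
    (V : Submodule ℝ (ℝ → ℝ))
    (u u_t u_x : ℝ → ℝ → ℝ) (cL' cR' : ℝ → ℝ) (t₀ : ℝ)
    -- u(·, t) belongs to V and u_x is its spatial derivative
    (huV : ∀ t, (fun x => u t x) ∈ V)
    (hux : ∀ t, ∀ x ∈ Set.uIcc xL xR, HasDerivAt (fun y => u t y) (u_x t x) x)
    (huint : IntervalIntegrable (fun x => u t₀ x * u_x t₀ x) volume xL xR)
    -- C¹ correction functions satisfying the stability conditions on V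
    (hcLstab : ∀ v ∈ V, (∫ x in xL..xR, v x * cL' x) = -(v xL))
    -- the FR-RBF semidiscretization with upwind numerical flux
    (hpde : ∀ x, u_t t₀ x =
      -(a * u_x t₀ x) - cL' x * (a * g t₀ - a * u t₀ xL)
        - cR' x * (a * u t₀ xR - a * u t₀ xR))
    -- chain rule / differentiation under the integral sign is assumed valid
    (D : ℝ)
    (hD : D = 2 * ∫ x in xL..xR, u t₀ x * u_t t₀ x) :
    D ≤ a * g t₀ ^ 2 := by
  have htest : ∀ x, u t₀ x * u_t t₀ x =
      -a * (u t₀ x * u_x t₀ x) + -(a * g t₀ - a * u t₀ xL) * (u t₀ x * cL' x) := by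
    intro x
    rw [hpde x]
    ring
  have hadvection := integral_self_mul_deriv_eq (hux t₀) huint
  have hstab := hcLstab _ (huV t₀)
  simp_rw [htest] at hD
  rcases integral_add_const_mul_eq_or_eq_zero (c := -(a * g t₀ - a * u t₀ xL))
    (huint.const_mul (-a)) with hsplit | hzero
  · rw [hsplit, intervalIntegral.integral_const_mul, hadvection, hstab] at hD
    have henergy : D = a * g t₀ ^ 2 - a * (g t₀ - u t₀ xL) ^ 2 - a * u t₀ xR ^ 2 := by
      rw [hD]
      ring
    nlinarith [sq_nonneg (g t₀ - u t₀ xL), sq_nonneg (u t₀ xR)]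
  · rw [hD, hzero, mul_zero]
    positivity

/-- Energy estimate for the FR-RBF method with upwind flux for `∂ₜ u + a ∂ₓ u = 0`:
`d/dt ‖u(·,t)‖²_{L²} ≤ a·g(t)²`. -/
theorem frRBF_energy_estimate
    (xL xR : ℝ) (hx : xL ≤ xR) (a : ℝ) (ha : 0 < a) (g : ℝ → ℝ)
    (V : Submodule ℝ (ℝ → ℝ))
    (u u_t u_x : ℝ → ℝ → ℝ) (cL cL' cR cR' : ℝ → ℝ) (t₀ : ℝ) (ht₀ : 0 ≤ t₀)
    -- V is a finite-dimensional subspace of C¹ functions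
    (hVfin : FiniteDimensional ℝ V)
    (hVC1 : ∀ v ∈ V, ∀ x ∈ Set.uIcc xL xR, DifferentiableAt ℝ v x)
    -- u(·, t) belongs to V and u_x is its spatial derivative
    (huV : ∀ t, (fun x => u t x) ∈ V)
    (hux : ∀ t, ∀ x ∈ Set.uIcc xL xR, HasDerivAt (fun y => u t y) (u_x t x) x)
    (huint : IntervalIntegrable (fun x => u t₀ x * u_x t₀ x) volume xL xR)
    -- C¹ correction functions satisfying the stability conditions on V
    (hcL : ∀ x ∈ Set.uIcc xL xR, HasDerivAt cL (cL' x) x)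
    (hcR : ∀ x ∈ Set.uIcc xL xR, HasDerivAt cR (cR' x) x)
    (hcLstab : ∀ v ∈ V, (∫ x in xL..xR, v x * cL' x) = -(v xL))
    (hcRstab : ∀ v ∈ V, (∫ x in xL..xR, v x * cR' x) = v xR)
    -- the FR-RBF semidiscretization with upwind numerical flux
    (hpde : ∀ x, u_t t₀ x =
      -(a * u_x t₀ x) - cL' x * (a * g t₀ - a * u t₀ xL)
        - cR' x * (a * u t₀ xR - a * u t₀ xR))
    -- chain rule / differentiation under the integral sign is assumed valid
    (D : ℝ)
    (hE : HasDerivAt (fun t => ∫ x in xL..xR, (u t x) ^ 2) D t₀)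
    (hD : D = 2 * ∫ x in xL..xR, u t₀ x * u_t t₀ x) :
    D ≤ a * g t₀ ^ 2 :=
  frRBF_energy_estimate_general xL xR a ha g V u u_t u_x cL' cR' t₀ huV hux huint hcLstab hpde D hD
end

section
/- Let a > 0, τ_L < -1/2, g : [0,∞) → ℝ continuous, and let u : [0,∞) → C¹([x_L,x_R]) be differentiable in time with ∂_t u = -a·u' + SAT in a weak sense, meaning d/dt ∫ u² dx = -2a ∫ u·u' dx + 2·u(x_L,t)·τ_L·a·(u(x_L,t) - g(t)). Then for all t ≥ 0, ‖u(·,t)‖²_{L²} ≤ ‖u(·,0)‖²_{L²} + (-τ_L²·a/(1+2τ_L)) · ∫₀ᵗ g(s)² ds. -/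
open MeasureTheory intervalIntegral

/-!
The energy `E(t) = ∫ u(t)²` is fenced by `B(t) = E(0) + C ∫₀ᵗ g²` with
`C = -τL² a / (1 + 2τL)`. By the fundamental theorem of calculus `∫ u u' = (u(xR)² - u(xL)²)/2`,
so the energy rate is `-a u(xR)² + a u(xL)² + 2 τL a u(xL) (u(xL) - g)`. Dropping the outflow
term `-a u(xR)² ≤ 0`, completing the square in `u(xL)` bounds the inflow part by `C g²`,
which is the rate of `B`.
-/

theorem integral_mul_deriv_self_eq {f f' : ℝ → ℝ} {a b : ℝ}
    (hf : ∀ x ∈ Set.uIcc a b, HasDerivAt f (f' x) x)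
    (hint : IntervalIntegrable (fun x => f x * f' x) volume a b) :
    ∫ x in a..b, f x * f' x = f b ^ 2 / 2 - f a ^ 2 / 2 := by
  have hsq : ∀ x ∈ Set.uIcc a b, HasDerivAt (fun y => f y ^ 2 / 2) (f x * f' x) x := fun x hx =>
    (((hf x hx).fun_pow 2).div_const 2).congr_deriv (by push_cast; ring)
  exact integral_eq_sub_of_hasDerivAt hsq hint

theorem sat_inflow_le {a τ : ℝ} (ha : 0 ≤ a) (hτ : τ < -(1 / 2)) (w g : ℝ) :
    a * w ^ 2 + 2 * w * τ * a * (w - g) ≤ -(τ ^ 2) * a / (1 + 2 * τ) * g ^ 2 := by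
  have hneg : 1 + 2 * τ < 0 := by linarith
  rw [div_mul_eq_mul_div, le_div_iff_of_neg hneg]
  have hsquare : (a * w ^ 2 + 2 * w * τ * a * (w - g)) * (1 + 2 * τ) - -(τ ^ 2) * a * g ^ 2
      = a * ((1 + 2 * τ) * w - τ * g) ^ 2 := by ring
  have : 0 ≤ a * ((1 + 2 * τ) * w - τ * g) ^ 2 := by positivity
  linarith

theorem sat_energy_rate_le {a τ : ℝ} (ha : 0 ≤ a) (hτ : τ < -(1 / 2)) (wL wR g : ℝ) :
    -(2 * a) * (wR ^ 2 / 2 - wL ^ 2 / 2) + 2 * wL * τ * a * (wL - g)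
      ≤ -(τ ^ 2) * a / (1 + 2 * τ) * g ^ 2 := by
  have houtflow : 0 ≤ a * wR ^ 2 := by positivity
  linarith [sat_inflow_le ha hτ wL g]

theorem satRBF_energy_stability_general
    (xL xR : ℝ) (a τL : ℝ) (ha : 0 < a) (hτ : τL < -(1 / 2))
    (g : ℝ → ℝ) (hg : Continuous g)
    (u u_x : ℝ → ℝ → ℝ)
    -- u(t, ·) is C¹ in space with spatial derivative u_x
    (hux : ∀ t, ∀ x ∈ Set.uIcc xL xR, HasDerivAt (fun y => u t y) (u_x t x) x)
    (huint : ∀ t, IntervalIntegrable (fun x => u t x * u_x t x) volume xL xR)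
    -- the SAT-RBF energy relation (weak form of ∂ₜ u = -a u' + SAT)
    (hE : ∀ t, 0 ≤ t → HasDerivAt (fun s => ∫ x in xL..xR, (u s x) ^ 2)
      (-(2 * a) * (∫ x in xL..xR, u t x * u_x t x)
        + 2 * u t xL * τL * a * (u t xL - g t)) t) :
    ∀ t, 0 ≤ t →
      (∫ x in xL..xR, (u t x) ^ 2) ≤
        (∫ x in xL..xR, (u 0 x) ^ 2)
          + (-(τL ^ 2) * a / (1 + 2 * τL)) * ∫ s in (0 : ℝ)..t, g s ^ 2 := by
  intro t ht
  set C := -(τL ^ 2) * a / (1 + 2 * τL)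
  have hB : ∀ s, HasDerivAt
      (fun r => (∫ x in xL..xR, (u 0 x) ^ 2) + C * ∫ y in (0 : ℝ)..r, g y ^ 2) (C * g s ^ 2) s :=
    fun s => (((hg.pow 2).integral_hasStrictDerivAt 0 s).hasDerivAt.const_mul C).const_add _
  have hrate : ∀ s, -(2 * a) * (∫ x in xL..xR, u s x * u_x s x)
      + 2 * u s xL * τL * a * (u s xL - g s) ≤ C * g s ^ 2 := fun s => by
    rw [integral_mul_deriv_self_eq (hux s) (huint s)]
    exact sat_energy_rate_le ha.le hτ _ _ _
  refine image_le_of_deriv_right_le_deriv_boundary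
    (fun s hs => (hE s hs.1).continuousAt.continuousWithinAt)
    (fun s hs => (hE s hs.1).hasDerivWithinAt) (by simp)
    (fun s _ => (hB s).continuousAt.continuousWithinAt)
    (fun s _ => (hB s).hasDerivWithinAt)
    (fun s _ => hrate s) ⟨ht, le_rfl⟩

/-- Strong energy stability of the 1D SAT-RBF semidiscretization for
`∂ₜ u + a ∂ₓ u = 0`, `a > 0`, with SAT penalty `τL < -1/2` at the inflow boundary:
`‖u(t)‖² ≤ ‖u(0)‖² + (-τL²·a/(1+2τL)) ∫₀ᵗ g(s)² ds`. -/
theorem satRBF_energy_stability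
    (xL xR : ℝ) (hx : xL ≤ xR) (a τL : ℝ) (ha : 0 < a) (hτ : τL < -(1 / 2))
    (g : ℝ → ℝ) (hg : Continuous g)
    (u u_x : ℝ → ℝ → ℝ)
    -- u(t, ·) is C¹ in space with spatial derivative u_x
    (hux : ∀ t, ∀ x ∈ Set.uIcc xL xR, HasDerivAt (fun y => u t y) (u_x t x) x)
    (huint : ∀ t, IntervalIntegrable (fun x => u t x * u_x t x) volume xL xR)
    -- the SAT-RBF energy relation (weak form of ∂ₜ u = -a u' + SAT)
    (hE : ∀ t, 0 ≤ t → HasDerivAt (fun s => ∫ x in xL..xR, (u s x) ^ 2)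
      (-(2 * a) * (∫ x in xL..xR, u t x * u_x t x)
        + 2 * u t xL * τL * a * (u t xL - g t)) t) :
    ∀ t, 0 ≤ t →
      (∫ x in xL..xR, (u t x) ^ 2) ≤
        (∫ x in xL..xR, (u 0 x) ^ 2)
          + (-(τL ^ 2) * a / (1 + 2 * τL)) * ∫ s in (0 : ℝ)..t, g s ^ 2 :=
  satRBF_energy_stability_general xL xR a τL ha hτ g hg u u_x hux huint hE
end

section
/- Let φ : [0,∞) → ℝ be a conditionally positive definite kernel of order m on ℝ^d, let X = {x₁,…,x_N} ⊂ ℝ^d be distinct points that are unisolvent for polynomials of degree < m, let Φ be the N×N matrix with Φ_{ij} = φ(‖x_i - x_j‖₂), and let P be the Q×N matrix P_{in} = p_i(x_n) for a basis {p₁,…,p_Q} of polynomials of degree < m. Then the (N+Q)×(N+Q) block matrix V = [[Φ, Pᵀ],[P, 0]] is invertible. -/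
/-!
If `V (α, β) = 0` then `Φ α = -Pᵀ β` and `P α = 0`, so `αᵀ Φ α = -(P α)ᵀ β = 0`. Since `P α = 0`
means that `α` annihilates every polynomial of degree `< m`, conditional positive definiteness
forces `α = 0`. Then `Pᵀ β = 0` says that `∑ βᵢ pᵢ` vanishes on `X`, so by unisolvency it is the
zero polynomial, and `β = 0` by linear independence of the `pᵢ`.
-/

open Matrix

namespace Matrix

variable {n o K : Type*} [Fintype n] [Fintype o] [DecidableEq n] [DecidableEq o] [Field K]

theorem isUnit_fromBlocks_transpose_zero (A : Matrix n n K) (B : Matrix o n K)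
    (hA : ∀ v ≠ 0, B *ᵥ v = 0 → v ⬝ᵥ A *ᵥ v ≠ 0) (hB : LinearIndependent K B.row) :
    IsUnit (fromBlocks A Bᵀ B 0) := by
  rw [← mulVec_injective_iff_isUnit, ← coe_mulVecLin, injective_iff_map_eq_zero]
  intro w hw
  rw [mulVecLin_apply, fromBlocks_mulVec] at hw
  set v := w ∘ Sum.inl
  set u := w ∘ Sum.inr
  have hAB : A *ᵥ v + Bᵀ *ᵥ u = 0 := by simpa [v, u] using congrArg (· ∘ Sum.inl) hw
  have hBv : B *ᵥ v = 0 := by simpa [v, u] using congrArg (· ∘ Sum.inr) hw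
  have hv : v = 0 := by
    by_contra hv
    refine hA v hv hBv ?_
    rw [eq_neg_of_add_eq_zero_left hAB, dotProduct_neg, dotProduct_mulVec, vecMul_transpose,
      hBv, zero_dotProduct, neg_zero]
  have hu : u = 0 := by
    rw [hv, mulVec_zero, zero_add, ← vecMul_transpose] at hAB
    exact vecMul_injective_iff.mpr hB (hAB.trans (zero_vecMul B).symm)
  ext (i | i)
  · exact congrFun hv i
  · exact congrFun hu i

end Matrix

namespace MvPolynomial

variable {σ ι κ R : Type*} [CommRing R]

theorem sum_mul_eval_eq_zero_of_mem_span [Fintype ι] {x : ι → σ → R} {α : ι → R}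
    {s : Set (MvPolynomial σ R)} (hs : ∀ p ∈ s, ∑ n, α n * eval (x n) p = 0)
    {q : MvPolynomial σ R} (hq : q ∈ Submodule.span R s) :
    ∑ n, α n * eval (x n) q = 0 := by
  induction hq using Submodule.span_induction with
  | mem p hp => exact hs p hp
  | zero => simp
  | add p q _ _ hp hq => simp [mul_add, Finset.sum_add_distrib, hp, hq]
  | smul c p _ hp => simp [mul_left_comm _ c, ← Finset.mul_sum, hp]

theorem linearIndependent_eval_of_unisolvent [Fintype κ] {m : ℕ} {x : ι → σ → R}
    {p : κ → MvPolynomial σ R} (hp : LinearIndependent R p) (hpdeg : ∀ i, (p i).totalDegree < m)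
    (huni : ∀ q : MvPolynomial σ R, q.totalDegree < m → (∀ n, eval (x n) q = 0) → q = 0) :
    LinearIndependent R fun i n => eval (x n) (p i) := by
  cases isEmpty_or_nonempty κ with
  | inl => exact linearIndependent_empty_type
  | inr hκ =>
    have hm : ⊥ < m := (Nat.zero_le _).trans_lt (hpdeg hκ.some)
    rw [Fintype.linearIndependent_iff]
    intro c hc
    have hdeg : (∑ i, c i • p i).totalDegree < m :=
      (totalDegree_finsetSum _ _).trans_lt <| (Finset.sup_lt_iff hm).mpr fun i _ =>
        (totalDegree_smul_le _ _).trans_lt (hpdeg i)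
    refine Fintype.linearIndependent_iff.mp hp c (huni _ hdeg fun n => ?_)
    simpa [Finset.sum_apply] using congrFun hc n

end MvPolynomial

/-- Well-posedness of RBF interpolation augmented with polynomials: for a conditionally
positive definite kernel `φ` of order `m` on `ℝ^d`, distinct centers `x₁,…,x_N` that are
unisolvent for polynomials of degree `< m`, and a basis `p₁,…,p_Q` of the polynomials of
degree `< m`, the block Vandermonde matrix `V = [[Φ, Pᵀ], [P, 0]]` is invertible. -/
theorem rbf_vandermonde_invertible
    (d m N Q : ℕ) (φ : ℝ → ℝ)
    (x : Fin N → EuclideanSpace ℝ (Fin d)) (hx : Function.Injective x)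
    (p : Fin Q → MvPolynomial (Fin d) ℝ)
    -- {p i} is a basis of the polynomials of total degree < m
    (hpdeg : ∀ i, (p i).totalDegree < m)
    (hpli : LinearIndependent ℝ p)
    (hpspan : ∀ q : MvPolynomial (Fin d) ℝ, q.totalDegree < m →
      q ∈ Submodule.span ℝ (Set.range p))
    -- φ is conditionally positive definite of order m on ℝ^d
    (hφ : ∀ (M : ℕ) (y : Fin M → EuclideanSpace ℝ (Fin d)), Function.Injective y →
      ∀ α : Fin M → ℝ, α ≠ 0 →
        (∀ q : MvPolynomial (Fin d) ℝ, q.totalDegree < m →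
          ∑ n, α n * MvPolynomial.eval (fun k => y n k) q = 0) →
        0 < ∑ i, ∑ j, α i * α j * φ (dist (y i) (y j)))
    -- X is unisolvent for polynomials of degree < m
    (huni : ∀ q : MvPolynomial (Fin d) ℝ, q.totalDegree < m →
      (∀ n, MvPolynomial.eval (fun k => x n k) q = 0) → q = 0)
    (Φ : Matrix (Fin N) (Fin N) ℝ) (hΦ : ∀ i j, Φ i j = φ (dist (x i) (x j)))
    (P : Matrix (Fin Q) (Fin N) ℝ)
    (hP : ∀ i n, P i n = MvPolynomial.eval (fun k => x n k) (p i)) :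
    IsUnit (Matrix.fromBlocks Φ Pᵀ P (0 : Matrix (Fin Q) (Fin Q) ℝ)) := by
  have hProws : P = of fun i n => MvPolynomial.eval (fun k => x n k) (p i) := ext hP
  refine isUnit_fromBlocks_transpose_zero Φ P (fun α hα hPα => ?_) ?_
  · have hpα : ∀ q ∈ Set.range p, ∑ n, α n * MvPolynomial.eval (fun k => x n k) q = 0 := by
      rintro _ ⟨i, rfl⟩
      simpa [hProws, mulVec, dotProduct, mul_comm] using congrFun hPα i
    have hquad : α ⬝ᵥ Φ *ᵥ α = ∑ i, ∑ j, α i * α j * φ (dist (x i) (x j)) := by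
      simp only [dotProduct, mulVec, hΦ, Finset.mul_sum]
      exact Finset.sum_congr rfl fun i _ => Finset.sum_congr rfl fun j _ => by ring
    rw [hquad]
    exact (hφ N x hx α hα fun q hq =>
      MvPolynomial.sum_mul_eval_eq_zero_of_mem_span hpα (hpspan q hq)).ne'
  · rw [hProws]
    exact MvPolynomial.linearIndependent_eval_of_unisolvent hpli hpdeg huni
end
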